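/- arXiv:2012.05599 — 2 statements merged into one kernel-verified Lean document; each statement's English description precedes it below -/
import Mathlib

section
/- With V a 2-dimensional symplectic vector space over a field of characteristic zero, and l_0, l_1, l_2 three distinct lines in V spanned by e_0, e_1, e_2 respectively, the kernel E = Ker(l_0 ⊕ l_1 ⊕ l_2 → V) is 1-dimensional, spanned by v = (ω(e_1,e_2)e_0, ω(e_2,e_0)e_1, ω(e_0,e_1)e_2), and the Maslov quadratic form q(v) = Σ_{i<j} ω(v_i,v_j) evaluates to q(v,v) = ω(e_1,e_2)·ω(e_2,e_0)·ω(e_0,e_1). -/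
/-!
For an alternating form on a plane, `ω(y,z) x + ω(z,x) y + ω(x,y) z = 0`, which says that
`v ∈ E`. Conversely, pairing a relation `t₀ e₀ + t₁ e₁ + t₂ e₂ = 0` with `e₂` and with `e₁`
shows that `(t₀, t₁, t₂)` is proportional to `(ω(e₁,e₂), ω(e₂,e₀), ω(e₀,e₁))`, so `E` is the
line through `v`, once `ω(e₁,e₂) ≠ 0`; and two distinct lines of a symplectic plane pair
nontrivially, since together they span it.
-/

open Module

variable (K : Type*) [Field K] (V : Type*) [AddCommGroup V] [Module K V]

/-- The linear map `(v_0,…,v_{n-1}) ↦ Σ_i v_i`. -/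
noncomputable def sumProj (n : ℕ) : (Fin n → V) →ₗ[K] V :=
  ∑ i : Fin n, LinearMap.proj i

/-- `E = Ker(⊕_i l_i → V)`: the subspace of tuples `v` with `v i ∈ l i` for all `i` and
`Σ_i v_i = 0`, realized inside `Fin n → V`. -/
noncomputable def maslovE (n : ℕ) (l : Fin n → Submodule K V) : Submodule K (Fin n → V) :=
  (⨅ i : Fin n, (l i).comap (LinearMap.proj i)) ⊓ LinearMap.ker (sumProj K V n)

variable {K V}

lemma mem_maslovE {n : ℕ} {l : Fin n → Submodule K V} {u : Fin n → V} :
    u ∈ maslovE K V n l ↔ (∀ i, u i ∈ l i) ∧ ∑ i, u i = 0 := by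
  simp [maslovE, sumProj, Submodule.mem_iInf, LinearMap.mem_ker]

lemma linearIndependent_pair_of_span_singleton_ne {x y : V} (hx : x ≠ 0) (hy : y ≠ 0)
    (h : K ∙ x ≠ K ∙ y) : LinearIndependent K ![x, y] := by
  rw [LinearIndependent.pair_iff' hx]
  rintro a rfl
  have ha : a ≠ 0 := by rintro rfl; simp at hy
  exact h (Submodule.span_singleton_smul_eq ha.isUnit x).symm

namespace LinearMap.IsAlt

variable {ω : V →ₗ[K] V →ₗ[K] K}

lemma apply_ne_zero_of_linearIndependent (hω : ω.IsAlt) (hs : ω.SeparatingLeft)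
    (hdim : finrank K V = 2) {x y : V} (h : LinearIndependent K ![x, y]) : ω x y ≠ 0 := by
  intro hxy
  have hspan : Submodule.span K (Set.range ![x, y]) = ⊤ :=
    h.span_eq_top_of_card_eq_finrank (by simp [hdim])
  have hx : ω x = 0 := LinearMap.ext_on_range hspan fun i => by
    fin_cases i
    · exact hω x
    · exact hxy
  exact h.ne_zero 0 (hs x fun w => by simp [hx])

lemma apply_eq_det_mul (hω : ω.IsAlt) (b : Basis (Fin 2) K V) (x y : V) :
    ω x y = (b.repr x 0 * b.repr y 1 - b.repr x 1 * b.repr y 0) * ω (b 0) (b 1) := by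
  calc ω x y = ω (∑ i, b.repr x i • b i) (∑ j, b.repr y j • b j) := by
        rw [b.sum_repr, b.sum_repr]
    _ = _ := by
        simp only [Fin.sum_univ_two, map_add, map_smul, LinearMap.add_apply,
          LinearMap.smul_apply, smul_eq_mul, hω.self_eq_zero, ← hω.neg (b 0) (b 1)]
        ring

/-- The left side is alternating and trilinear in `(x, y, z)`, hence vanishes in dimension 2. -/
lemma smul_add_smul_add_smul_eq_zero (hω : ω.IsAlt) (hdim : finrank K V = 2) (x y z : V) :
    ω y z • x + ω z x • y + ω x y • z = 0 := by
  have : FiniteDimensional K V := .of_finrank_eq_succ hdim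
  let b := Module.finBasisOfFinrankEq K V hdim
  rw [hω.apply_eq_det_mul b y, hω.apply_eq_det_mul b z, hω.apply_eq_det_mul b x]
  apply b.repr.injective
  ext i
  fin_cases i <;> simp <;> ring

lemma mul_apply_eq_of_smul_add_smul_add_smul_eq_zero (hω : ω.IsAlt) {x y z : V} {s t u : K}
    (h : s • x + t • y + u • z = 0) : t * ω y z = s * ω z x := by
  have hz := congrArg (fun w => ω w z) h
  simp only [map_add, map_smul, LinearMap.add_apply, LinearMap.smul_apply, smul_eq_mul,
    hω.self_eq_zero, mul_zero, add_zero, map_zero, LinearMap.zero_apply] at hz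
  rw [← hω.neg x z]
  linear_combination hz

end LinearMap.IsAlt

lemma maslovE_three_eq_span (ω : V →ₗ[K] V →ₗ[K] K) (hω : ω.IsAlt) (hdim : finrank K V = 2)
    (e : Fin 3 → V) (ha : ω (e 1) (e 2) ≠ 0) :
    maslovE K V 3 (fun i => K ∙ e i) =
      K ∙ (![ω (e 1) (e 2) • e 0, ω (e 2) (e 0) • e 1, ω (e 0) (e 1) • e 2] : Fin 3 → V) := by
  apply le_antisymm
  · intro u hu
    obtain ⟨hmem, hsum⟩ := mem_maslovE.mp hu
    obtain ⟨t₀, h₀⟩ := Submodule.mem_span_singleton.mp (hmem 0)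
    obtain ⟨t₁, h₁⟩ := Submodule.mem_span_singleton.mp (hmem 1)
    obtain ⟨t₂, h₂⟩ := Submodule.mem_span_singleton.mp (hmem 2)
    rw [Fin.sum_univ_three, ← h₀, ← h₁, ← h₂] at hsum
    have hsum' : t₂ • e 2 + t₀ • e 0 + t₁ • e 1 = 0 := by rw [← hsum]; abel
    have hrel₁ := hω.mul_apply_eq_of_smul_add_smul_add_smul_eq_zero hsum
    have hrel₂ := hω.mul_apply_eq_of_smul_add_smul_add_smul_eq_zero hsum'
    refine Submodule.mem_span_singleton.mpr ⟨t₀ / ω (e 1) (e 2), funext fun i => ?_⟩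
    fin_cases i
    · simp [← h₀, smul_smul, div_mul_cancel₀ _ ha]
    · simp [← h₁, smul_smul, div_mul_eq_mul_div, div_eq_of_eq_mul ha hrel₁.symm]
    · simp [← h₂, smul_smul, div_mul_eq_mul_div, div_eq_of_eq_mul ha hrel₂]
  · rw [Submodule.span_singleton_le_iff_mem, mem_maslovE]
    refine ⟨fun i => ?_, ?_⟩
    · fin_cases i <;> exact Submodule.smul_mem _ _ (Submodule.mem_span_singleton_self _)
    · simpa [Fin.sum_univ_three] using hω.smul_add_smul_add_smul_eq_zero hdim (e 0) (e 1) (e 2)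

theorem maslov_three_lines_general
    (ω : V →ₗ[K] V →ₗ[K] K)
    (halt : ∀ v : V, ω v v = 0)
    (hnd : ∀ v : V, (∀ w : V, ω v w = 0) → v = 0)
    (hdim : finrank K V = 2)
    (e : Fin 3 → V) (he : ∀ i, e i ≠ 0)
    (hld : ∀ i j : Fin 3, i ≠ j →
      Submodule.span K {e i} ≠ Submodule.span K {e j}) :
    finrank K (maslovE K V 3 fun i => Submodule.span K {e i}) = 1 ∧
    maslovE K V 3 (fun i => Submodule.span K {e i}) =
      Submodule.span K
        {(![ω (e 1) (e 2) • e 0, ω (e 2) (e 0) • e 1, ω (e 0) (e 1) • e 2] : Fin 3 → V)} ∧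
    (fun v : Fin 3 → V => ω (v 0) (v 1) + ω (v 0) (v 2) + ω (v 1) (v 2))
        ![ω (e 1) (e 2) • e 0, ω (e 2) (e 0) • e 1, ω (e 0) (e 1) • e 2] =
      ω (e 1) (e 2) * (ω (e 2) (e 0) * ω (e 0) (e 1)) := by
  have hω : ω.IsAlt := halt
  have ha : ω (e 1) (e 2) ≠ 0 := hω.apply_ne_zero_of_linearIndependent hnd hdim
    (linearIndependent_pair_of_span_singleton_ne (he 1) (he 2) (hld 1 2 (by decide)))
  have hE := maslovE_three_eq_span ω hω hdim e ha
  refine ⟨?_, hE, ?_⟩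
  · rw [hE]
    exact finrank_span_singleton fun h => smul_ne_zero ha (he 0) (congrFun h 0)
  · simp only [Matrix.cons_val, map_smul, LinearMap.smul_apply, smul_eq_mul,
      ← hω.neg (e 2) (e 0)]
    ring

/-- Let `(V, ω)` be a 2-dimensional symplectic vector space over a field of characteristic
zero and `l_0, l_1, l_2` three distinct lines spanned by `e_0, e_1, e_2`. Then
`E = Ker(l_0 ⊕ l_1 ⊕ l_2 → V)` is 1-dimensional, spanned by
`v = (ω(e_1,e_2)e_0, ω(e_2,e_0)e_1, ω(e_0,e_1)e_2)`, and the Maslov quadratic form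
`q(v) = Σ_{i<j} ω(v_i,v_j)` evaluates to `q(v,v) = ω(e_1,e_2)·ω(e_2,e_0)·ω(e_0,e_1)`. -/
theorem maslov_three_lines [CharZero K]
    (ω : V →ₗ[K] V →ₗ[K] K)
    (halt : ∀ v : V, ω v v = 0)
    (hnd : ∀ v : V, (∀ w : V, ω v w = 0) → v = 0)
    (hdim : finrank K V = 2)
    (e : Fin 3 → V) (he : ∀ i, e i ≠ 0)
    (hld : ∀ i j : Fin 3, i ≠ j →
      Submodule.span K {e i} ≠ Submodule.span K {e j}) :
    finrank K (maslovE K V 3 fun i => Submodule.span K {e i}) = 1 ∧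
    maslovE K V 3 (fun i => Submodule.span K {e i}) =
      Submodule.span K
        {(![ω (e 1) (e 2) • e 0, ω (e 2) (e 0) • e 1, ω (e 0) (e 1) • e 2] : Fin 3 → V)} ∧
    (fun v : Fin 3 → V => ω (v 0) (v 1) + ω (v 0) (v 2) + ω (v 1) (v 2))
        ![ω (e 1) (e 2) • e 0, ω (e 2) (e 0) • e 1, ω (e 0) (e 1) • e 2] =
      ω (e 1) (e 2) * (ω (e 2) (e 0) * ω (e 0) (e 1)) :=
  maslov_three_lines_general ω halt hnd hdim e he hld
end

section
/- Let E be a vector space carrying the Maslov quadratic form associated to m+2 distinct lines l_0,…,l_{m+1} in a 2-dimensional symplectic vector space. For distinct triples {i1,i2,i3} and {j1,j2,j3} of indices, if the corresponding triangles in a convex (m+2)-gon (with vertices labeled 0,…,m+1 in cyclic order) have disjoint interiors, then the lines E_{i1,i2,i3} and E_{j1,j2,j3} in E are orthogonal with respect to the Maslov form. -/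
open Module

variable (K : Type*) [Field K] (V : Type*) [AddCommGroup V] [Module K V]

/-- `E_I`: the subspace of `E` of vectors supported on the index set `I`. -/
noncomputable def maslovEI (n : ℕ) (l : Fin n → Submodule K V) (I : Set (Fin n)) :
    Submodule K (Fin n → V) :=
  maslovE K V n l ⊓
    ⨅ i ∈ Iᶜ, LinearMap.ker (LinearMap.proj (R := K) (φ := fun _ : Fin n => V) i)

/-- The symmetric bilinear form associated to the Maslov quadratic form
`q(v) = Σ_{p<q} ω(v_p, v_q)`. -/
noncomputable def maslovB (n : ℕ) (ω : V →ₗ[K] V →ₗ[K] K) (v w : Fin n → V) : K :=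
  (2 : K)⁻¹ * ∑ q : Fin n, ∑ p ∈ Finset.Iio q, (ω (v p) (w q) + ω (w p) (v q))

/-- Two triangles inscribed in the convex `(m+2)`-gon with vertices `0,…,m+1` in cyclic order,
given by vertex sets `S` and `T`, have disjoint interiors: some chord `{i,j}` separates them,
one triangle lying in the interval `[i,j]`, the other in the complementary cyclic interval. -/
def TrianglesDisjoint (m : ℕ) (S T : Finset (Fin (m + 2))) : Prop :=
  ∃ i j : Fin (m + 2), i ≤ j ∧
    (((∀ a ∈ S, a ≤ i ∨ j ≤ a) ∧ ∀ b ∈ T, i ≤ b ∧ b ≤ j) ∨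
     ((∀ a ∈ T, a ≤ i ∨ j ≤ a) ∧ ∀ b ∈ S, i ≤ b ∧ b ≤ j))

/-! If a chord `{i, j}` separates the triangles, a vector `v ∈ E_S` vanishes strictly between
`i` and `j`, while `w ∈ E_T` vanishes outside `[i, j]` and sums to zero. In
`Σ_{p<q} ω(v_p, w_q)` every nonzero `w_q` is then paired with the same partial sum
`Σ_{p ≤ i} v_p`, so this half equals `ω(Σ_{p ≤ i} v_p, Σ_q w_q) = 0`. In `Σ_{p<q} ω(w_p, v_q)`
the partial sum `Σ_{p<q} w_p` is `0` for `q ≤ i` and `-w_q` for `q ≥ j`. All diagonal terms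
`ω(v_p, w_p)` vanish since `v_p` and `w_p` lie on the same line `l_p` and `ω` is alternating. -/

open Finset

variable {K V}

theorem LinearMap.IsAlt.apply_eq_zero_of_finrank_eq_one {M N : Type*} [AddCommGroup M]
    [Module K M] [AddCommGroup N] [Module K N] {B : M →ₗ[K] M →ₗ[K] N} (hB : B.IsAlt)
    {W : Submodule K M} (hW : finrank K W = 1) {x y : M} (hx : x ∈ W) (hy : y ∈ W) :
    B x y = 0 := by
  obtain ⟨z, -, hz⟩ := finrank_eq_one_iff'.mp hW
  obtain ⟨a, ha⟩ := hz ⟨x, hx⟩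
  obtain ⟨b, hb⟩ := hz ⟨y, hy⟩
  obtain rfl : a • (z : M) = x := congrArg Subtype.val ha
  obtain rfl : b • (z : M) = y := congrArg Subtype.val hb
  simp [hB.self_eq_zero]

section Separated

variable {ι R M N : Type*} [LinearOrder ι] [Fintype ι] [LocallyFiniteOrderBot ι] [CommRing R]
  [AddCommGroup M] [Module R M] [AddCommGroup N] [Module R N]
  (B : M →ₗ[R] M →ₗ[R] N) {v w : ι → M} {i j : ι}

theorem sum_sum_Iio_apply_eq_zero_of_separated (hv : ∀ p ∈ Set.Ioo i j, v p = 0)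
    (hw : ∀ p ∉ Set.Icc i j, w p = 0) (hw_sum : ∑ p, w p = 0)
    (hvw : ∀ p, B (v p) (w p) = 0) :
    ∑ q, ∑ p ∈ Iio q, B (v p) (w q) = 0 := by
  have h_partial (q : ι) : B (∑ p ∈ Iio q, v p) (w q) = B (∑ p ∈ Iic i, v p) (w q) := by
    by_cases hq : q ∈ Set.Icc i j
    · rcases hq.1.eq_or_lt with rfl | hiq
      · rw [← Iio_insert, sum_insert notMem_Iio_self, map_add, LinearMap.add_apply, hvw,
          zero_add]
      · congr 2
        refine (sum_subset (fun p hp => ?_) fun p hp hpi => hv p ?_).symm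
        · exact mem_Iio.2 ((mem_Iic.1 hp).trans_lt hiq)
        · exact ⟨not_le.1 (mt mem_Iic.2 hpi), (mem_Iio.1 hp).trans_le hq.2⟩
    · simp [hw q hq]
  calc ∑ q, ∑ p ∈ Iio q, B (v p) (w q)
      = ∑ q, B (∑ p ∈ Iic i, v p) (w q) := by
        simp_rw [← h_partial, map_sum, LinearMap.sum_apply]
    _ = 0 := by rw [← map_sum, hw_sum, map_zero]

theorem sum_Iio_eq_neg_of_forall_lt_eq_zero [LocallyFiniteOrderTop ι] {q : ι}
    (hw_sum : ∑ p, w p = 0) (hw : ∀ p, q < p → w p = 0) : ∑ p ∈ Iio q, w p = -w q := by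
  have h_split := Fintype.sum_eq_add_sum_compl q w
  rw [← Ioi_disjUnion_Iio, sum_disjUnion, sum_eq_zero fun p hp => hw p (mem_Ioi.1 hp),
    zero_add, hw_sum] at h_split
  exact eq_neg_of_add_eq_zero_right h_split.symm

theorem sum_sum_Iio_apply_swap_eq_zero_of_separated [LocallyFiniteOrderTop ι]
    (hv : ∀ p ∈ Set.Ioo i j, v p = 0) (hw : ∀ p ∉ Set.Icc i j, w p = 0)
    (hw_sum : ∑ p, w p = 0) (hwv : ∀ p, B (w p) (v p) = 0) :
    ∑ q, ∑ p ∈ Iio q, B (w p) (v q) = 0 := by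
  refine sum_eq_zero fun q _ => ?_
  rw [← LinearMap.sum_apply, ← map_sum]
  by_cases hq : q ∈ Set.Ioo i j
  · simp [hv q hq]
  rcases le_or_gt q i with hqi | hiq
  · rw [sum_eq_zero fun p hp => hw p fun hp' => (mem_Iio.1 hp).not_ge (hqi.trans hp'.1),
      map_zero, LinearMap.zero_apply]
  · have hjq : j ≤ q := not_lt.1 fun hqj => hq ⟨hiq, hqj⟩
    rw [sum_Iio_eq_neg_of_forall_lt_eq_zero hw_sum fun p hp => hw p fun hp' =>
      hp.not_ge (hp'.2.trans hjq), map_neg, LinearMap.neg_apply, hwv, neg_zero]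

end Separated

theorem maslovB_comm {n : ℕ} (ω : V →ₗ[K] V →ₗ[K] K) (v w : Fin n → V) :
    maslovB K V n ω v w = maslovB K V n ω w v := by
  simp only [maslovB, add_comm (ω (v _) (w _))]

theorem mem_maslovEI {n : ℕ} {l : Fin n → Submodule K V} {I : Set (Fin n)} {v : Fin n → V} :
    v ∈ maslovEI K V n l I ↔ (∀ p, v p ∈ l p) ∧ ∑ p, v p = 0 ∧ ∀ p ∉ I, v p = 0 := by
  simp [maslovEI, maslovE, sumProj, Submodule.mem_iInf, LinearMap.sum_apply, and_assoc]

theorem maslovB_eq_zero_of_separated {n : ℕ} {ω : V →ₗ[K] V →ₗ[K] K} (hω : ω.IsAlt)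
    {l : Fin n → Submodule K V} (hl : ∀ p, finrank K (l p) = 1) {I J : Set (Fin n)}
    {i j : Fin n} (hI : ∀ a ∈ I, a ≤ i ∨ j ≤ a) (hJ : ∀ b ∈ J, i ≤ b ∧ b ≤ j)
    {v w : Fin n → V} (hv : v ∈ maslovEI K V n l I) (hw : w ∈ maslovEI K V n l J) :
    maslovB K V n ω v w = 0 := by
  obtain ⟨hvl, -, hvI⟩ := mem_maslovEI.1 hv
  obtain ⟨hwl, hw_sum, hwJ⟩ := mem_maslovEI.1 hw
  have hv_out (p) (hp : p ∈ Set.Ioo i j) : v p = 0 :=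
    hvI p fun hpI => (hI p hpI).elim hp.1.not_ge hp.2.not_ge
  have hw_in (p) (hp : p ∉ Set.Icc i j) : w p = 0 := hwJ p fun hpJ => hp (hJ p hpJ)
  have hline (x y : Fin n → V) (hx : ∀ p, x p ∈ l p) (hy : ∀ p, y p ∈ l p) (p) :
      ω (x p) (y p) = 0 :=
    hω.apply_eq_zero_of_finrank_eq_one (hl p) (hx p) (hy p)
  simp only [maslovB, sum_add_distrib]
  rw [sum_sum_Iio_apply_eq_zero_of_separated ω hv_out hw_in hw_sum (hline v w hvl hwl),
    sum_sum_Iio_apply_swap_eq_zero_of_separated ω hv_out hw_in hw_sum (hline w v hwl hvl),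
    add_zero, mul_zero]

theorem maslov_disjoint_triangles_orthogonal_general (m : ℕ)
    (ω : V →ₗ[K] V →ₗ[K] K)
    (halt : ∀ v : V, ω v v = 0)
    (l : Fin (m + 2) → Submodule K V)
    (hl : ∀ i, finrank K (l i) = 1)
    (S T : Finset (Fin (m + 2)))
    (hdisj : TrianglesDisjoint m S T) :
    ∀ v ∈ maslovEI K V (m + 2) l (S : Set (Fin (m + 2))),
      ∀ w ∈ maslovEI K V (m + 2) l (T : Set (Fin (m + 2))),
        maslovB K V (m + 2) ω v w = 0 := by
  intro v hv w hw
  obtain ⟨i, j, -, ⟨hS, hT⟩ | ⟨hT, hS⟩⟩ := hdisj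
  · exact maslovB_eq_zero_of_separated halt hl hS hT hv hw
  · rw [maslovB_comm]
    exact maslovB_eq_zero_of_separated halt hl hT hS hw hv

/-- Let `E` carry the Maslov quadratic form associated to `m+2` distinct lines `l_0,…,l_{m+1}`
in a 2-dimensional symplectic vector space `(V, ω)`. For distinct triples `S = {i1,i2,i3}` and
`T = {j1,j2,j3}` of indices whose corresponding inscribed triangles in a convex `(m+2)`-gon
have disjoint interiors, the subspaces `E_S = E_{i1,i2,i3}` and `E_T = E_{j1,j2,j3}` of `E`
are orthogonal with respect to the Maslov form. -/
theorem maslov_disjoint_triangles_orthogonal (m : ℕ) [CharZero K]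
    (ω : V →ₗ[K] V →ₗ[K] K)
    (halt : ∀ v : V, ω v v = 0)
    (hnd : ∀ v : V, (∀ w : V, ω v w = 0) → v = 0)
    (hdim : finrank K V = 2)
    (l : Fin (m + 2) → Submodule K V)
    (hl : ∀ i, finrank K (l i) = 1)
    (hld : ∀ i j, i ≠ j → l i ≠ l j)
    (S T : Finset (Fin (m + 2))) (hS : S.card = 3) (hT : T.card = 3) (hST : S ≠ T)
    (hdisj : TrianglesDisjoint m S T) :
    ∀ v ∈ maslovEI K V (m + 2) l (S : Set (Fin (m + 2))),
      ∀ w ∈ maslovEI K V (m + 2) l (T : Set (Fin (m + 2))),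
        maslovB K V (m + 2) ω v w = 0 :=
  maslov_disjoint_triangles_orthogonal_general m ω halt l hl S T hdisj
end
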